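/- arXiv:1810.04200 — 4 statements merged into one kernel-verified Lean document; each statement's English description precedes it below -/
import Mathlib

section
/- Let B be an n×n real matrix, H an m×n matrix, and R an m×m symmetric positive definite matrix. With Σ = BB' and Λ = I_n + B'H'R^{-1}HB, the Kalman gain satisfies ΣH'(HΣH' + R)^{-1} = B Λ^{-1} B' H' R^{-1}. -/
open Matrix

theorem stmt_1 (n m : ℕ) (B : Matrix (Fin n) (Fin n) ℝ)
    (H : Matrix (Fin m) (Fin n) ℝ) (R : Matrix (Fin m) (Fin m) ℝ)
    (hR : R.PosDef) :
    (B * Bᵀ) * Hᵀ * (H * (B * Bᵀ) * Hᵀ + R)⁻¹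
      = B * (1 + Bᵀ * Hᵀ * R⁻¹ * H * B)⁻¹ * Bᵀ * Hᵀ * R⁻¹ := by
  set C : Matrix (Fin m) (Fin n) ℝ := H * B with hC
  have hCT : Cᵀ = Bᵀ * Hᵀ := by rw [hC, transpose_mul]
  have h1 : (H * (B * Bᵀ) * Hᵀ + R).PosDef := by
    have : (H * (B * Bᵀ) * Hᵀ).PosSemidef := by
      have := (posSemidef_self_mul_conjTranspose B).mul_mul_conjTranspose_same H
      simpa [← conjTranspose_eq_transpose_of_trivial, Matrix.mul_assoc] using this
    exact Matrix.PosDef.posSemidef_add this hR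
  have h2 : (1 + Bᵀ * Hᵀ * R⁻¹ * H * B).PosDef := by
    have : (Cᴴ * R⁻¹ * C).PosSemidef := hR.inv.posSemidef.conjTranspose_mul_mul_same C
    have h2' : (Bᵀ * Hᵀ * R⁻¹ * H * B).PosSemidef := by
      simpa [conjTranspose_eq_transpose_of_trivial, hCT, hC, Matrix.mul_assoc] using this
    have := (Matrix.PosDef.one (n := Fin n) (R := ℝ)).add_posSemidef h2'
    exact this
  have hRu : IsUnit R := hR.isUnit
  have h1u : IsUnit (H * (B * Bᵀ) * Hᵀ + R) := h1.isUnit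
  have h2u : IsUnit (1 + Bᵀ * Hᵀ * R⁻¹ * H * B) := h2.isUnit
  -- key identity: Λ * Cᵀ = Cᵀ * R⁻¹ * (C*Cᵀ + R)
  have key : (1 + Bᵀ * Hᵀ * R⁻¹ * H * B) * (Bᵀ * Hᵀ) * (H * (B * Bᵀ) * Hᵀ + R)⁻¹
      = (Bᵀ * Hᵀ) * R⁻¹ := by
    have hkey : (1 + Bᵀ * Hᵀ * R⁻¹ * H * B) * (Bᵀ * Hᵀ)
        = (Bᵀ * Hᵀ) * R⁻¹ * (H * (B * Bᵀ) * Hᵀ + R) := by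
      have hRR : R⁻¹ * R = 1 := nonsing_inv_mul R (isUnit_iff_isUnit_det R |>.1 hRu)
      simp only [Matrix.add_mul, Matrix.mul_add, Matrix.one_mul, Matrix.mul_assoc, hRR,
        Matrix.mul_one]
      abel
    calc (1 + Bᵀ * Hᵀ * R⁻¹ * H * B) * (Bᵀ * Hᵀ) * (H * (B * Bᵀ) * Hᵀ + R)⁻¹
        = (Bᵀ * Hᵀ) * R⁻¹ * ((H * (B * Bᵀ) * Hᵀ + R) * (H * (B * Bᵀ) * Hᵀ + R)⁻¹) := by
          rw [hkey, Matrix.mul_assoc]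
      _ = (Bᵀ * Hᵀ) * R⁻¹ := by
          rw [mul_nonsing_inv _ (isUnit_iff_isUnit_det _ |>.1 h1u), Matrix.mul_one]
  have h2inv : (1 + Bᵀ * Hᵀ * R⁻¹ * H * B)⁻¹ * (1 + Bᵀ * Hᵀ * R⁻¹ * H * B) = 1 :=
    nonsing_inv_mul _ (isUnit_iff_isUnit_det _ |>.1 h2u)
  have final : (Bᵀ * Hᵀ) * (H * (B * Bᵀ) * Hᵀ + R)⁻¹
      = (1 + Bᵀ * Hᵀ * R⁻¹ * H * B)⁻¹ * ((Bᵀ * Hᵀ) * R⁻¹) := by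
    calc (Bᵀ * Hᵀ) * (H * (B * Bᵀ) * Hᵀ + R)⁻¹
        = ((1 + Bᵀ * Hᵀ * R⁻¹ * H * B)⁻¹ * (1 + Bᵀ * Hᵀ * R⁻¹ * H * B))
            * ((Bᵀ * Hᵀ) * (H * (B * Bᵀ) * Hᵀ + R)⁻¹) := by rw [h2inv, Matrix.one_mul]
      _ = (1 + Bᵀ * Hᵀ * R⁻¹ * H * B)⁻¹
            * ((1 + Bᵀ * Hᵀ * R⁻¹ * H * B) * (Bᵀ * Hᵀ) * (H * (B * Bᵀ) * Hᵀ + R)⁻¹) := by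
          simp only [Matrix.mul_assoc]
      _ = (1 + Bᵀ * Hᵀ * R⁻¹ * H * B)⁻¹ * ((Bᵀ * Hᵀ) * R⁻¹) := by rw [key]
  calc (B * Bᵀ) * Hᵀ * (H * (B * Bᵀ) * Hᵀ + R)⁻¹
      = B * ((Bᵀ * Hᵀ) * (H * (B * Bᵀ) * Hᵀ + R)⁻¹) := by
        simp only [Matrix.mul_assoc]
    _ = B * ((1 + Bᵀ * Hᵀ * R⁻¹ * H * B)⁻¹ * ((Bᵀ * Hᵀ) * R⁻¹)) := by rw [final]
    _ = B * (1 + Bᵀ * Hᵀ * R⁻¹ * H * B)⁻¹ * Bᵀ * Hᵀ * R⁻¹ := by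
        simp only [Matrix.mul_assoc]
end

section
/- Let Σ = BB' with B ∈ ℝ^{n×n}, H ∈ ℝ^{m×n}, R ∈ ℝ^{m×m} symmetric positive definite, Λ = I_n + B'H'R^{-1}HB with Cholesky factor L (Λ = LL'), and B̃ = B(L^{-1})'. For any vector z ∈ ℝ^m, define ỹ = B̃'H'R^{-1}z. Then z'(HΣH' + R)^{-1}z = z'R^{-1}z − ỹ'ỹ. -/
open Matrix

theorem stmt_4 (n m : ℕ) (B : Matrix (Fin n) (Fin n) ℝ)
    (H : Matrix (Fin m) (Fin n) ℝ) (R : Matrix (Fin m) (Fin m) ℝ)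
    (hR : R.PosDef) (L : Matrix (Fin n) (Fin n) ℝ)
    (hLtri : ∀ i j : Fin n, i < j → L i j = 0)
    (hLdiag : ∀ i : Fin n, 0 < L i i)
    (hChol : 1 + Bᵀ * Hᵀ * R⁻¹ * H * B = L * Lᵀ)
    (z : Fin m → ℝ) :
    z ⬝ᵥ ((H * (B * Bᵀ) * Hᵀ + R)⁻¹ *ᵥ z)
      = z ⬝ᵥ (R⁻¹ *ᵥ z)
        - (((B * (L⁻¹)ᵀ)ᵀ * Hᵀ * R⁻¹) *ᵥ z) ⬝ᵥ (((B * (L⁻¹)ᵀ)ᵀ * Hᵀ * R⁻¹) *ᵥ z) := by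
  obtain ⟨V, hV⟩ : ∃ V, V = H * B := ⟨_, rfl⟩
  obtain ⟨Λ, hΛdef⟩ : ∃ Λ, Λ = 1 + Bᵀ * Hᵀ * R⁻¹ * H * B := ⟨_, rfl⟩
  -- basic facts about R
  have hRsymm : Rᵀ = R := hR.isHermitian.eq
  have hRinv_symm : (R⁻¹)ᵀ = R⁻¹ := by rw [transpose_nonsing_inv, hRsymm]
  have hRunit : IsUnit R.det := hR.det_pos.ne'.isUnit
  have hRRi : R * R⁻¹ = 1 := mul_nonsing_inv _ hRunit
  -- Λ in terms of V
  have hΛV : Λ = 1 + Vᵀ * R⁻¹ * V := by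
    rw [hΛdef, hV, Matrix.transpose_mul]
    simp only [Matrix.mul_assoc]
  -- Λ is positive definite
  have hΛpd : Λ.PosDef := by
    rw [hΛV]
    refine (Matrix.PosDef.one).add_posSemidef ?_
    have := (hR.inv.posSemidef).conjTranspose_mul_mul_same V
    simpa using this
  have hΛunit : IsUnit Λ.det := hΛpd.det_pos.ne'.isUnit
  have hΛΛi : Λ * Λ⁻¹ = 1 := mul_nonsing_inv _ hΛunit
  -- rewrite H * (B * Bᵀ) * Hᵀ as V * Vᵀ
  have hVVt : H * (B * Bᵀ) * Hᵀ = V * Vᵀ := by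
    rw [hV, Matrix.transpose_mul]
    simp only [Matrix.mul_assoc]
  -- key: VᵀR⁻¹V = Λ - 1
  have hKey : Vᵀ * R⁻¹ * V = Λ - 1 := by rw [hΛV, add_sub_cancel_left]
  -- Woodbury: the inverse of V*Vᵀ + R
  have hWood : (V * Vᵀ + R)⁻¹ = R⁻¹ - R⁻¹ * V * Λ⁻¹ * Vᵀ * R⁻¹ := by
    apply inv_eq_right_inv
    calc (V * Vᵀ + R) * (R⁻¹ - R⁻¹ * V * Λ⁻¹ * Vᵀ * R⁻¹)
        = V * (Vᵀ * R⁻¹) + R * R⁻¹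
          - V * ((Vᵀ * R⁻¹ * V) * Λ⁻¹) * (Vᵀ * R⁻¹)
          - (R * R⁻¹) * (V * Λ⁻¹ * (Vᵀ * R⁻¹)) := by
            simp only [Matrix.mul_sub, Matrix.sub_mul, Matrix.add_mul, Matrix.mul_add, Matrix.mul_assoc]
            abel
      _ = V * (Vᵀ * R⁻¹) + 1 - V * ((Λ - 1) * Λ⁻¹) * (Vᵀ * R⁻¹)
          - V * Λ⁻¹ * (Vᵀ * R⁻¹) := by rw [hRRi, hKey, Matrix.one_mul]
      _ = 1 := by
          rw [sub_mul, hΛΛi, Matrix.one_mul]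
          simp only [Matrix.mul_sub, Matrix.sub_mul, Matrix.mul_add, Matrix.add_mul,
            Matrix.mul_assoc, Matrix.one_mul, Matrix.mul_one]
          abel
  -- Λ⁻¹ = (L⁻¹)ᵀ * L⁻¹
  have hΛinv : Λ⁻¹ = (L⁻¹)ᵀ * L⁻¹ := by
    rw [hΛdef, hChol, Matrix.mul_inv_rev, transpose_nonsing_inv]
  -- the matrix of the quadratic form on the right
  have hWtW : ((B * (L⁻¹)ᵀ)ᵀ * Hᵀ * R⁻¹)ᵀ * ((B * (L⁻¹)ᵀ)ᵀ * Hᵀ * R⁻¹)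
      = R⁻¹ * V * Λ⁻¹ * Vᵀ * R⁻¹ := by
    rw [hΛinv, hV]
    simp only [Matrix.transpose_mul, Matrix.transpose_transpose, hRinv_symm, Matrix.mul_assoc]
  have hdot : ∀ (W : Matrix (Fin n) (Fin m) ℝ),
      (W *ᵥ z) ⬝ᵥ (W *ᵥ z) = z ⬝ᵥ ((Wᵀ * W) *ᵥ z) := by
    intro W
    rw [← Matrix.mulVec_mulVec, Matrix.mulVec_transpose, Matrix.dotProduct_mulVec,
      dotProduct_comm]
  rw [hVVt, hWood, Matrix.sub_mulVec, dotProduct_sub, hdot, hWtW]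
end

section
/- Let L be an invertible lower-triangular n×n matrix such that each column j of L has nonzero entries only within the index set N(j) ⊆ {j, j+1, …, n} with j ∈ N(j), and suppose the sets satisfy: for any i ∈ N(j) with i > j, N(i) ⊆ N(j). Then each column j of L^{-1} also has its nonzero entries contained in N(j). -/
open Matrix

theorem stmt_15 (n : ℕ) (N : Fin n → Set (Fin n))
    (hmem : ∀ j : Fin n, j ∈ N j)
    (hbelow : ∀ (j i : Fin n), i ∈ N j → j ≤ i)
    (hnest : ∀ (j i : Fin n), i ∈ N j → j < i → N i ⊆ N j)
    (L : Matrix (Fin n) (Fin n) ℝ)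
    (hLtri : ∀ i j : Fin n, i < j → L i j = 0)
    (hLinv : IsUnit L.det)
    (hLsparse : ∀ i j : Fin n, i ∉ N j → L i j = 0) :
    ∀ i j : Fin n, i ∉ N j → L⁻¹ i j = 0 := by
  have hdiag : ∀ i : Fin n, L i i ≠ 0 := by
    intro i h0
    have hdet : L.det = ∏ k, L k k :=
      Matrix.det_of_lowerTriangular L (fun a b h => hLtri a b h)
    have hz : L.det = 0 := by
      rw [hdet]; exact Finset.prod_eq_zero (Finset.mem_univ i) h0
    rw [hz] at hLinv
    exact not_isUnit_zero hLinv
  intro i j hij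
  have H : ∀ m : ℕ, ∀ i : Fin n, (i : ℕ) < m → i ∉ N j → L⁻¹ i j = 0 := by
    intro m
    induction m with
    | zero => intro i h; exact absurd h (Nat.not_lt_zero _)
    | succ m IH =>
      intro i him hij
      have hne : i ≠ j := fun h => hij (h ▸ hmem j)
      have h1 : (L * L⁻¹) i j = 0 := by
        rw [Matrix.mul_nonsing_inv L hLinv, Matrix.one_apply_ne hne]
      rw [Matrix.mul_apply] at h1
      have h2 : ∑ k, L i k * L⁻¹ k j = L i i * L⁻¹ i j := by
        apply Finset.sum_eq_single
        · intro k _ hki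
          rcases lt_or_gt_of_ne hki with hk | hk
          · by_cases hL : L i k = 0
            · rw [hL, zero_mul]
            · have hiNk : i ∈ N k := by
                by_contra hc; exact hL (hLsparse i k hc)
              have hkNj : k ∉ N j := by
                intro hkj
                rcases lt_or_eq_of_le (hbelow j k hkj) with hjk | hjk
                · exact hij (hnest j k hkj hjk hiNk)
                · exact hij (by rw [hjk]; exact hiNk)
              rw [IH k (by have h := Fin.lt_def.mp hk; omega) hkNj, mul_zero]
          · rw [hLtri i k hk, zero_mul]
        · intro h; exact absurd (Finset.mem_univ i) h
      rw [h2] at h1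
      exact (mul_eq_zero.mp h1).resolve_left (hdiag i)
  exact H (i + 1) i (Nat.lt_succ_self _) hij
end

section
/- Let B be an n×n matrix whose columns are grouped into M+1 blocks B = (B^M, …, B^0), where each B^m is block-diagonal over a partition 𝒫_m of rows with 𝒫_m refining 𝒫_{m-1}, with r_m columns per block. Then each column of the lower triangle of B'B (with rows/columns ordered so that the block for resolution M comes first and resolution 0 last, respecting the nested partition order) has at most N = Σ_{m=0}^M r_m nonzero entries. -/
open Matrix

theorem stmt_18 (n M : ℕ) (r : Fin (M + 1) → ℕ)
    (p : Fin (M + 1) → Fin n → ℕ)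
    (hrefine : ∀ (m m' : Fin (M + 1)), m ≤ m' →
      ∀ x x' : Fin n, p m' x = p m' x' → p m x = p m x')
    (ρ : Fin n → Fin (M + 1)) (hρ : Antitone ρ)
    (q : Fin n → ℕ)
    (B : Matrix (Fin n) (Fin n) ℝ)
    (hBsparse : ∀ (x j : Fin n), p (ρ j) x ≠ q j → B x j = 0)
    (hcols : ∀ (m : Fin (M + 1)) (k : ℕ),
      {i : Fin n | ρ i = m ∧ q i = k}.ncard ≤ r m) :
    ∀ j : Fin n, {i : Fin n | j ≤ i ∧ (Bᵀ * B) i j ≠ 0}.ncard ≤ ∑ m, r m := by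
  intro j
  set S : Set (Fin n) := {i : Fin n | j ≤ i ∧ (Bᵀ * B) i j ≠ 0} with hSdef
  -- witness extraction: any i in S has x with B x i ≠ 0 and B x j ≠ 0
  have hwit : ∀ i ∈ S, ∃ x : Fin n, B x i ≠ 0 ∧ B x j ≠ 0 := by
    intro i hi
    obtain ⟨-, hne⟩ := hi
    by_contra h
    push_neg at h
    apply hne
    simp only [Matrix.mul_apply, Matrix.transpose_apply]
    apply Finset.sum_eq_zero
    intro x _
    by_cases h1 : B x i = 0
    · rw [h1, zero_mul]
    · rw [h x h1, mul_zero]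
  rcases Set.eq_empty_or_nonempty S with hS | ⟨i0, hi0⟩
  · simp [hS]
  obtain ⟨x0, -, hx0j⟩ := hwit i0 hi0
  have hx0 : p (ρ j) x0 = q j := by
    by_contra h; exact hx0j (hBsparse x0 j h)
  have hsub : S ⊆ ⋃ m : Fin (M + 1), {i : Fin n | ρ i = m ∧ q i = p m x0} := by
    intro i hi
    obtain ⟨x, hxi, hxj⟩ := hwit i hi
    have hqi : p (ρ i) x = q i := by
      by_contra h; exact hxi (hBsparse x i h)
    have hqj : p (ρ j) x = q j := by
      by_contra h; exact hxj (hBsparse x j h)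
    have hle : ρ i ≤ ρ j := hρ hi.1
    have : p (ρ i) x = p (ρ i) x0 :=
      hrefine (ρ i) (ρ j) hle x x0 (hqj.trans hx0.symm)
    exact Set.mem_iUnion.2 ⟨ρ i, rfl, by rw [← hqi, this]⟩
  calc S.ncard ≤ (⋃ m : Fin (M + 1), {i : Fin n | ρ i = m ∧ q i = p m x0}).ncard :=
        Set.ncard_le_ncard hsub (Set.toFinite _)
    _ ≤ ∑ m : Fin (M + 1), {i : Fin n | ρ i = m ∧ q i = p m x0}.ncard := by
        classical
        have := Finset.card_biUnion_le (s := (Finset.univ : Finset (Fin (M + 1))))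
          (t := fun m => {i : Fin n | ρ i = m ∧ q i = p m x0}.toFinset)
        have heq : (⋃ m : Fin (M + 1), {i : Fin n | ρ i = m ∧ q i = p m x0}) =
            ↑((Finset.univ : Finset (Fin (M + 1))).biUnion
              (fun m => {i : Fin n | ρ i = m ∧ q i = p m x0}.toFinset)) := by
          ext i; simp
        rw [heq, Set.ncard_coe_finset]
        refine this.trans (le_of_eq ?_)
        apply Finset.sum_congr rfl
        intro m _
        rw [Set.ncard_eq_toFinset_card']
    _ ≤ ∑ m, r m := Finset.sum_le_sum fun m _ => hcols m (p m x0)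
end
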